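/- arXiv:1612.02234 — 3 statements merged into one kernel-verified Lean document; each statement's English description precedes it below -/
import Mathlib

section
/- Let A be the adjacency matrix of the fulvene graph (the 6×6 matrix with rows (0,1,0,0,1,0), (1,0,1,0,0,0), (0,1,0,1,0,0), (0,0,1,0,1,1), (1,0,0,1,0,0), (0,0,0,1,0,0)) and let D = diag(1,1,−1,−1,−1,1). Then every entry of D A⁻¹ D is nonpositive; in particular the fulvene graph is negatively invertible. -/
open Matrix

/-- The adjacency matrix of the fulvene graph. -/
def fulveneA : Matrix (Fin 6) (Fin 6) ℤ :=
  !![0,1,0,0,1,0;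
     1,0,1,0,0,0;
     0,1,0,1,0,0;
     0,0,1,0,1,1;
     1,0,0,1,0,0;
     0,0,0,1,0,0]

/-- The signature matrix `D = diag(1,1,-1,-1,-1,1)`. -/
def fulveneD : Matrix (Fin 6) (Fin 6) ℤ :=
  diagonal ![1,1,-1,-1,-1,1]

def fulveneB : Matrix (Fin 6) (Fin 6) ℤ :=
  !![0,0,0,0,1,-1;
     0,0,1,0,0,-1;
     0,1,0,0,-1,1;
     0,0,0,0,0,1;
     1,0,-1,0,0,1;
     -1,-1,1,1,1,-2]

theorem fulvene_inv : fulveneA⁻¹ = fulveneB := by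
  apply inv_eq_right_inv
  decide

/-- with `D = diag(1,1,-1,-1,-1,1)`, every entry of `D A⁻¹ D` is
nonpositive, i.e. the fulvene graph is negatively invertible. -/
theorem stmt4 :
    ∀ i j, (fulveneD * fulveneA⁻¹ * fulveneD) i j ≤ 0 := by
  rw [fulvene_inv]
  decide
end

section
/- Every connected simple graph on 6 vertices having a unique perfect matching has a nonsingular adjacency matrix; i.e., the determinant of its adjacency matrix (over ℚ, equivalently ℤ) is nonzero. -/
/-- A simple graph has a unique perfect matching (unique 1-factor) if there is
exactly one perfect matching. -/
def HasUniquePM {V : Type*} (G : SimpleGraph V) : Prop :=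
  ∃! M : G.Subgraph, M.IsPerfectMatching

/-!
Over a ring of characteristic two the signs in the Leibniz formula disappear, so the determinant is
the permanent. Pairing each permutation `σ` with `σ⁻¹`, which contributes the same product when the
matrix is symmetric, cancels all terms except those of the involutions.
For an adjacency matrix the surviving terms are exactly the perfect matchings, so modulo two the
determinant counts perfect matchings. A unique perfect matching therefore makes the integer
determinant odd.
-/

open Finset Equiv

theorem Finset.sum_eq_sum_filter_apply_eq_self_of_charTwo {ι R : Type*} [Ring R] [CharP R 2]
    [DecidableEq ι] (s : Finset ι) (f : ι → R) (g : ι → ι) (hg : Function.Involutive g)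
    (hs : ∀ x ∈ s, g x ∈ s) (hf : ∀ x ∈ s, f (g x) = f x) :
    ∑ x ∈ s, f x = ∑ x ∈ s with g x = x, f x := by
  rw [← sum_filter_add_sum_filter_not s (fun x => g x = x), add_eq_left]
  refine sum_involution (fun x _ => g x) ?_ ?_ ?_ ?_
  · intro x hx
    rw [hf x (mem_filter.1 hx).1, CharTwo.add_self_eq_zero]
  · intro x hx _
    exact (mem_filter.1 hx).2
  · intro x hx
    simp only [mem_filter] at hx ⊢
    exact ⟨hs x hx.1, by rw [hg x]; exact Ne.symm hx.2⟩
  · intro x _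
    exact hg x

namespace Matrix

variable {n R : Type*} [Fintype n]

theorem IsSymm.prod_perm_inv_apply [CommMonoid R] {A : Matrix n n R} (hA : A.IsSymm)
    (σ : Perm n) : ∏ i, A (σ⁻¹ i) i = ∏ i, A (σ i) i := by
  rw [← Equiv.prod_comp σ]
  simp [hA.apply]

variable [DecidableEq n]

theorem det_eq_permanent_of_charTwo [CommRing R] [CharP R 2] (A : Matrix n n R) :
    A.det = A.permanent := by
  rw [det_apply, permanent]
  refine sum_congr rfl fun σ _ => ?_
  rcases Int.units_eq_one_or (Perm.sign σ) with h | h <;> simp [h, CharTwo.neg_eq]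

theorem IsSymm.det_eq_sum_inv_eq_self_of_charTwo [CommRing R] [CharP R 2] {A : Matrix n n R}
    (hA : A.IsSymm) : A.det = ∑ σ : Perm n with σ⁻¹ = σ, ∏ i, A (σ i) i := by
  rw [det_eq_permanent_of_charTwo, permanent]
  exact sum_eq_sum_filter_apply_eq_self_of_charTwo _ _ _ inv_involutive (by simp)
    fun σ _ => hA.prod_perm_inv_apply σ

end Matrix

namespace SimpleGraph

variable {V : Type*} (G : SimpleGraph V)

def Subgraph.ofPerm (σ : Perm V) (hσ : σ⁻¹ = σ) (hG : ∀ v, G.Adj v (σ v)) : G.Subgraph where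
  verts := Set.univ
  Adj v w := σ v = w
  adj_sub := by
    rintro v _ rfl
    exact hG v
  edge_vert _ := trivial
  symm := ⟨by
    rintro v _ rfl
    simpa only [hσ] using Perm.inv_eq_iff_eq.mpr (rfl : σ v = σ v)⟩

theorem Subgraph.isPerfectMatching_ofPerm (σ : Perm V) (hσ : σ⁻¹ = σ)
    (hG : ∀ v, G.Adj v (σ v)) : (Subgraph.ofPerm G σ hσ hG).IsPerfectMatching :=
  Subgraph.isPerfectMatching_iff.mpr fun v => ⟨σ v, rfl, fun _ h => Eq.symm h⟩

variable [DecidableRel G.Adj]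

theorem map_adjMatrix {α β : Type*} [Zero α] [One α] [Zero β] [One β] (f : α → β)
    (h₀ : f 0 = 0) (h₁ : f 1 = 1) : (G.adjMatrix α).map f = G.adjMatrix β := by
  ext v w
  by_cases h : G.Adj v w <;> simp [adjMatrix_apply, h, h₀, h₁]

variable [Fintype V]

theorem prod_adjMatrix_perm_apply {R : Type*} [CommMonoidWithZero R] (σ : Perm V) :
    ∏ v, G.adjMatrix R (σ v) v = if ∀ v, G.Adj v (σ v) then 1 else 0 := by
  simp only [adjMatrix_apply, prod_boole, mem_univ, true_implies, G.adj_comm (σ _)]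

theorem det_adjMatrix_of_charTwo [DecidableEq V] {R : Type*} [CommRing R] [CharP R 2] :
    (G.adjMatrix R).det = #{σ : Perm V | σ⁻¹ = σ ∧ ∀ v, G.Adj v (σ v)} := by
  rw [G.isSymm_adjMatrix.det_eq_sum_inv_eq_self_of_charTwo]
  simp only [prod_adjMatrix_perm_apply, sum_boole, filter_filter]

end SimpleGraph

open SimpleGraph

theorem HasUniquePM.existsUnique_perm {V : Type*} {G : SimpleGraph V} (hm : HasUniquePM G) :
    ∃! σ : Perm V, σ⁻¹ = σ ∧ ∀ v, G.Adj v (σ v) := by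
  obtain ⟨M, hM, huniq⟩ := hm
  choose p hp hp_unique using Subgraph.isPerfectMatching_iff.mp hM
  have hp_inv : Function.Involutive p := fun v => (hp_unique _ _ (M.adj_symm (hp v))).symm
  refine ⟨hp_inv.toPerm, ⟨Function.Involutive.toPerm_symm hp_inv, fun v => M.adj_sub (hp v)⟩, ?_⟩
  rintro σ ⟨hσ, hG⟩
  ext v
  have hσM : Subgraph.ofPerm G σ hσ hG = M := huniq _ (Subgraph.isPerfectMatching_ofPerm G σ hσ hG)
  exact hp_unique v (σ v) (hσM ▸ rfl)

theorem HasUniquePM.det_adjMatrix_eq_one {V : Type*} [Fintype V] [DecidableEq V] {R : Type*}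
    [CommRing R] [CharP R 2] {G : SimpleGraph V} [DecidableRel G.Adj] (hm : HasUniquePM G) :
    (G.adjMatrix R).det = 1 := by
  rw [det_adjMatrix_of_charTwo, (Fintype.existsUnique_iff_card_one _).mp hm.existsUnique_perm,
    Nat.cast_one]

theorem stmt8_general (G : SimpleGraph (Fin 6)) [DecidableRel G.Adj]
    (hm : HasUniquePM G) :
    (G.adjMatrix ℤ).det ≠ 0 := by
  intro h
  have hodd : ((G.adjMatrix ℤ).det : ZMod 2) = 1 := by
    rw [Int.cast_det, G.map_adjMatrix _ Int.cast_zero Int.cast_one]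
    exact hm.det_adjMatrix_eq_one
  simp [h] at hodd

/-- every connected simple graph on 6 vertices with a unique perfect
matching has nonsingular adjacency matrix. -/
theorem stmt8 (G : SimpleGraph (Fin 6)) [DecidableRel G.Adj]
    (hc : G.Connected) (hm : HasUniquePM G) :
    (G.adjMatrix ℤ).det ≠ 0 :=
  stmt8_general G hm
end

section
/- There exist two connected simple graphs on 6 vertices, each having a unique perfect matching, which are not isomorphic to each other but whose adjacency matrices have the same characteristic polynomial (i.e., they are iso-spectral). -/
open Matrix

/-- The integer adjacency matrix of a finite simple graph. -/
noncomputable def adjMat {V : Type*} [Fintype V] [DecidableEq V]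
    (G : SimpleGraph V) : Matrix V V ℤ :=
  letI := Classical.decRel G.Adj
  G.adjMatrix ℤ

/-!
Take the bowtie with a leaf at its centre and the diamond with a leaf at each of its two
vertices of degree 2. In both graphs the leaves force their matching edges, and these force
the remaining one. The maximum degrees (5 and 3) tell the graphs apart, and expanding the
determinants gives the common characteristic polynomial `X⁶ - 7X⁴ - 4X³ + 7X² + 4X - 1`.
-/

namespace SimpleGraph

variable {V : Type*} {G : SimpleGraph V}

theorem adjMat_eq_adjMatrix [Fintype V] [DecidableEq V] [DecidableRel G.Adj] :
    adjMat G = G.adjMatrix ℤ := by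
  unfold adjMat
  congr

def Subgraph.ofInvolutive {p : V → V} (hG : ∀ v, G.Adj v (p v)) (hp : Function.Involutive p) :
    G.Subgraph where
  verts := Set.univ
  Adj v w := p v = w
  adj_sub := by
    rintro v _ rfl
    exact hG v
  edge_vert _ := trivial
  symm := ⟨fun v _ h => h ▸ hp v⟩

theorem Subgraph.isPerfectMatching_ofInvolutive {p : V → V} (hG : ∀ v, G.Adj v (p v))
    (hp : Function.Involutive p) : (Subgraph.ofInvolutive hG hp).IsPerfectMatching :=
  Subgraph.isPerfectMatching_iff.2 fun _ => existsUnique_eq'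

theorem Subgraph.IsPerfectMatching.adj_of_forall_adj {M : G.Subgraph} (hM : M.IsPerfectMatching)
    {u v : V} (h : ∀ w, M.Adj v w → w = u) : M.Adj v u := by
  obtain ⟨w, hw, -⟩ := Subgraph.isPerfectMatching_iff.1 hM v
  exact h w hw ▸ hw

theorem Subgraph.IsPerfectMatching.eq_ofInvolutive {M : G.Subgraph} (hM : M.IsPerfectMatching)
    {p : V → V} (hG : ∀ v, G.Adj v (p v)) (hp : Function.Involutive p)
    (h : ∀ v, M.Adj v (p v)) : M = Subgraph.ofInvolutive hG hp := by
  ext v w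
  · exact iff_of_true (hM.2 v) (Set.mem_univ v)
  · show M.Adj v w ↔ p v = w
    exact ⟨hM.1.eq_of_adj_left (h v), fun hvw => hvw ▸ h v⟩

theorem hasUniquePM_of_forall_adj {p : V → V} (hG : ∀ v, G.Adj v (p v))
    (hp : Function.Involutive p)
    (h : ∀ M : G.Subgraph, M.IsPerfectMatching → ∀ v, M.Adj v (p v)) : HasUniquePM G :=
  ⟨_, Subgraph.isPerfectMatching_ofInvolutive hG hp,
    fun M hM => hM.eq_ofInvolutive hG hp (h M hM)⟩

end SimpleGraph

open SimpleGraph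

abbrev bowtieWithLeaf : SimpleGraph (Fin 6) :=
  fromEdgeSet ↑({s(0, 5), s(1, 2), s(1, 5), s(2, 5), s(3, 4), s(3, 5), s(4, 5)} :
    Finset (Sym2 (Fin 6)))

abbrev diamondWithLeaves : SimpleGraph (Fin 6) :=
  fromEdgeSet ↑({s(0, 2), s(1, 3), s(2, 4), s(2, 5), s(3, 4), s(3, 5), s(4, 5)} :
    Finset (Sym2 (Fin 6)))

theorem bowtieWithLeaf_hasUniquePM : HasUniquePM bowtieWithLeaf := by
  refine hasUniquePM_of_forall_adj (p := ![5, 2, 1, 4, 3, 0]) (by decide)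
    (fun v => by fin_cases v <;> rfl) ?_
  intro M hM
  have h05 : M.Adj 0 5 := hM.adj_of_forall_adj fun w hw =>
    (by decide : ∀ w, bowtieWithLeaf.Adj 0 w → w = 5) w (M.adj_sub hw)
  have h12 : M.Adj 1 2 := hM.adj_of_forall_adj fun w hw => by
    obtain rfl | rfl :=
      (by decide : ∀ w, bowtieWithLeaf.Adj 1 w → w = 2 ∨ w = 5) w (M.adj_sub hw)
    · rfl
    · exact absurd (hM.1.eq_of_adj_right h05 hw) (by decide)
  have h34 : M.Adj 3 4 := hM.adj_of_forall_adj fun w hw => by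
    obtain rfl | rfl :=
      (by decide : ∀ w, bowtieWithLeaf.Adj 3 w → w = 4 ∨ w = 5) w (M.adj_sub hw)
    · rfl
    · exact absurd (hM.1.eq_of_adj_right h05 hw) (by decide)
  intro v
  fin_cases v
  exacts [h05, h12, h12.symm, h34, h34.symm, h05.symm]

theorem diamondWithLeaves_hasUniquePM : HasUniquePM diamondWithLeaves := by
  refine hasUniquePM_of_forall_adj (p := ![2, 3, 0, 1, 5, 4]) (by decide)
    (fun v => by fin_cases v <;> rfl) ?_
  intro M hM
  have h02 : M.Adj 0 2 := hM.adj_of_forall_adj fun w hw =>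
    (by decide : ∀ w, diamondWithLeaves.Adj 0 w → w = 2) w (M.adj_sub hw)
  have h13 : M.Adj 1 3 := hM.adj_of_forall_adj fun w hw =>
    (by decide : ∀ w, diamondWithLeaves.Adj 1 w → w = 3) w (M.adj_sub hw)
  have h45 : M.Adj 4 5 := hM.adj_of_forall_adj fun w hw => by
    obtain rfl | rfl | rfl :=
      (by decide : ∀ w, diamondWithLeaves.Adj 4 w → w = 5 ∨ w = 2 ∨ w = 3) w (M.adj_sub hw)
    · rfl
    · exact absurd (hM.1.eq_of_adj_right h02 hw) (by decide)
    · exact absurd (hM.1.eq_of_adj_right h13 hw) (by decide)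
  intro v
  fin_cases v
  exacts [h02, h13, h02.symm, h13.symm, h45, h45.symm]

theorem bowtieWithLeaf_adjMatrix : bowtieWithLeaf.adjMatrix ℤ =
    !![0, 0, 0, 0, 0, 1; 0, 0, 1, 0, 0, 1; 0, 1, 0, 0, 0, 1;
       0, 0, 0, 0, 1, 1; 0, 0, 0, 1, 0, 1; 1, 1, 1, 1, 1, 0] := by
  decide

theorem diamondWithLeaves_adjMatrix : diamondWithLeaves.adjMatrix ℤ =
    !![0, 0, 1, 0, 0, 0; 0, 0, 0, 1, 0, 0; 1, 0, 0, 0, 1, 1;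
       0, 1, 0, 0, 1, 1; 0, 0, 1, 1, 0, 1; 0, 0, 1, 1, 1, 0] := by
  decide

theorem charpoly_adjMatrix_bowtieWithLeaf_eq_diamondWithLeaves :
    (bowtieWithLeaf.adjMatrix ℤ).charpoly = (diamondWithLeaves.adjMatrix ℤ).charpoly := by
  rw [bowtieWithLeaf_adjMatrix, diamondWithLeaves_adjMatrix, Matrix.charpoly, Matrix.charpoly]
  simp only [det_succ_row_zero, Fin.sum_univ_succ, Fin.sum_univ_zero, submatrix_apply,
    charmatrix_apply, of_apply, Fin.succ_succAbove_zero, Fin.succ_succAbove_succ,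
    Fin.zero_succAbove, cons_val_zero, cons_val_succ, det_fin_zero, cons_val', empty_val',
    cons_val_fin_one, Fin.val_zero, Fin.val_succ, pow_zero, pow_succ, diagonal_apply,
    Fin.succ_inj, Fin.succ_ne_zero, (Fin.succ_ne_zero _).symm, if_true, if_false, map_zero,
    map_one]
  ring

/-- there exist two non-isomorphic connected simple graphs on 6
vertices, each with a unique perfect matching, whose adjacency matrices have the
same characteristic polynomial (iso-spectral graphs). -/
theorem stmt14 : ∃ G H : SimpleGraph (Fin 6),
    G.Connected ∧ HasUniquePM G ∧ H.Connected ∧ HasUniquePM H ∧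
    ¬ Nonempty (G ≃g H) ∧ (adjMat G).charpoly = (adjMat H).charpoly := by
  refine ⟨bowtieWithLeaf, diamondWithLeaves, by decide, bowtieWithLeaf_hasUniquePM, by decide,
    diamondWithLeaves_hasUniquePM, fun ⟨e⟩ => absurd e.maxDegree_eq (by decide), ?_⟩
  rw [adjMat_eq_adjMatrix, adjMat_eq_adjMatrix,
    charpoly_adjMatrix_bowtieWithLeaf_eq_diamondWithLeaves]
end
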